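/- arXiv:2304.03113 — 5 statements merged into one kernel-verified Lean document; each statement's English description precedes it below -/
import Mathlib

section
/- Let (Ω, F, μ) be a standard Borel probability space, let m₁ and m₂ be sub-σ-algebras of F, and let Y : Ω → ℝ be square-integrable (Y ∈ L²(μ)). If m₂ and σ(Y) are conditionally independent given m₁, then E[(Y − E[Y | m₁ ⊔ m₂])²] = E[(Y − E[Y | m₁])²]. In other words, for the mean-squared-error loss with its optimal predictor (the conditional expectation), the surplus performance contribution ν(X_{S∪j}) − ν(X_S) of adding the feature generating m₂ to the coalition generating m₁ is zero. -/
open MeasureTheory ProbabilityTheory Set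
open scoped NNReal

/-- The σ-algebra generated by a real-valued function. -/
private abbrev mco {Ω : Type*} (Y : Ω → ℝ) : MeasurableSpace Ω :=
  MeasurableSpace.comap Y Real.measurableSpace

/-- π-system induction: if two integrable functions have equal integrals on all
intersections `s ∩ t` with `s ∈ m₁`, `t ∈ m₂`, then they have equal integrals on all
sets of `m₁ ⊔ m₂`. -/
private lemma setIntegral_eq_on_sup_aux {Ω : Type*} (m₁ m₂ : MeasurableSpace Ω)
    [mΩ : MeasurableSpace Ω] {μ : Measure Ω}
    [IsFiniteMeasure μ] (hm₁ : m₁ ≤ mΩ) (hm₂ : m₂ ≤ mΩ)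
    {f g : Ω → ℝ} (hf : Integrable f μ) (hg : Integrable g μ)
    (h : ∀ s t, MeasurableSet[m₁] s → MeasurableSet[m₂] t →
      ∫ x in s ∩ t, f x ∂μ = ∫ x in s ∩ t, g x ∂μ) :
    ∀ u, MeasurableSet[m₁ ⊔ m₂] u → ∫ x in u, f x ∂μ = ∫ x in u, g x ∂μ := by
  have hsup : m₁ ⊔ m₂ ≤ mΩ := sup_le hm₁ hm₂
  set p : Set (Set Ω) :=
    {u | ∃ s t, MeasurableSet[m₁] s ∧ MeasurableSet[m₂] t ∧ u = s ∩ t} with hp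
  have hgen : (m₁ ⊔ m₂) = MeasurableSpace.generateFrom p := by
    refine le_antisymm (sup_le ?_ ?_) (MeasurableSpace.generateFrom_le ?_)
    · intro s hs
      exact MeasurableSpace.measurableSet_generateFrom
        ⟨s, Set.univ, hs, MeasurableSet.univ, (Set.inter_univ s).symm⟩
    · intro t ht
      exact MeasurableSpace.measurableSet_generateFrom
        ⟨Set.univ, t, MeasurableSet.univ, ht, (Set.univ_inter t).symm⟩
    · rintro u ⟨s, t, hs, ht, rfl⟩
      exact ((le_sup_left : m₁ ≤ m₁ ⊔ m₂) s hs).inter ((le_sup_right : m₂ ≤ m₁ ⊔ m₂) t ht)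
  have hpi : IsPiSystem p := by
    rintro u ⟨s, t, hs, ht, rfl⟩ v ⟨s', t', hs', ht', rfl⟩ -
    exact ⟨s ∩ s', t ∩ t', hs.inter hs', ht.inter ht',
      by rw [Set.inter_inter_inter_comm]⟩
  have htot : ∫ x, f x ∂μ = ∫ x, g x ∂μ := by
    have := h Set.univ Set.univ MeasurableSet.univ MeasurableSet.univ
    simpa using this
  intro u hu
  refine MeasurableSpace.induction_on_inter (m := m₁ ⊔ m₂)
    (C := fun u _ => ∫ x in u, f x ∂μ = ∫ x in u, g x ∂μ) hgen hpi (by simp) ?_ ?_ ?_ u hu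
  · rintro u ⟨s, t, hs, ht, rfl⟩
    exact h s t hs ht
  · intro t ht hC
    have ht' : MeasurableSet[mΩ] t := hsup t ht
    have h1 := integral_add_compl ht' hf
    have h2 := integral_add_compl ht' hg
    linarith
  · intro s hdisj hmeas hC
    rw [integral_iUnion (fun i => hsup _ (hmeas i)) hdisj hf.integrableOn,
      integral_iUnion (fun i => hsup _ (hmeas i)) hdisj hg.integrableOn]
    exact tsum_congr hC

private theorem mse_aux
    {Ω : Type*} (m₁ m₂ : MeasurableSpace Ω)
    [mΩ : MeasurableSpace Ω] [StandardBorelSpace Ω] [Nonempty Ω]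
    (μ : Measure Ω) [IsProbabilityMeasure μ]
    (hm₁ : m₁ ≤ mΩ) (hm₂ : m₂ ≤ mΩ)
    (Y : Ω → ℝ) (hYmeas : Measurable Y) (hYL2 : MemLp Y 2 μ)
    (hCI : CondIndep m₁ m₂ (mco Y) hm₁ μ) :
    ∫ ω, (Y ω - (μ[Y | m₁ ⊔ m₂]) ω) ^ 2 ∂μ = ∫ ω, (Y ω - (μ[Y | m₁]) ω) ^ 2 ∂μ := by
  have hmY : mco Y ≤ mΩ := measurable_iff_comap_le.mp hYmeas
  have hM : m₁ ⊔ mco Y ≤ mΩ := sup_le hm₁ hmY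
  have hsup : m₁ ⊔ m₂ ≤ mΩ := sup_le hm₁ hm₂
  have hYint : Integrable Y μ := hYL2.integrable one_le_two
  -- unfolded conditional independence
  have hCI' := (condIndep_iff m₁ m₂ (mco Y) hm₁ hm₂ hmY μ).mp hCI
  -- Claim B: for s₂ ∈ m₂, μ⟦s₂ | m₁ ⊔ mco Y⟧ = μ⟦s₂ | m₁⟧ a.e.
  have claimB : ∀ s₂, MeasurableSet[m₂] s₂ →
      (μ[s₂.indicator (fun _ => (1:ℝ)) | m₁ ⊔ mco Y])
        =ᵐ[μ] μ[s₂.indicator (fun _ => (1:ℝ)) | m₁] := by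
    intro s₂ hs₂
    set χ₂ : Ω → ℝ := s₂.indicator (fun _ => (1:ℝ)) with hχ₂
    have hχ₂int : Integrable χ₂ μ := (integrable_const (1:ℝ)).indicator (hm₂ _ hs₂)
    set g : Ω → ℝ := μ[χ₂ | m₁] with hgdef
    have hgint : Integrable g μ := integrable_condExp
    have hgbd : ∀ᵐ x ∂μ, ‖g x‖ ≤ (1:ℝ) := by
      have hb : ∀ᵐ x ∂μ, |χ₂ x| ≤ ((1:ℝ≥0) : ℝ) := by
        refine Filter.Eventually.of_forall fun x => ?_
        by_cases hx : x ∈ s₂ <;> simp [hχ₂, Set.indicator, hx]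
      have := ae_bdd_condExp_of_ae_bdd (m := m₁) (μ := μ) hb
      filter_upwards [this] with x hx
      simpa [Real.norm_eq_abs] using hx
    refine (ae_eq_condExp_of_forall_setIntegral_eq hM hχ₂int
      (fun s _ _ => hgint.integrableOn) ?_
      ((stronglyMeasurable_condExp.mono (le_sup_left : m₁ ≤ m₁ ⊔ mco Y)).aestronglyMeasurable (μ := μ))).symm
    intro u hu _
    refine setIntegral_eq_on_sup_aux m₁ (mco Y) hm₁ hmY hgint hχ₂int ?_ u hu
    intro s t hs ht
    have ht' : MeasurableSet[mΩ] t := hmY t ht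
    set χt : Ω → ℝ := t.indicator (fun _ => (1:ℝ)) with hχt
    have hχtint : Integrable χt μ := (integrable_const (1:ℝ)).indicator ht'
    have hgt : ∀ x, g x * χt x = t.indicator g x := by
      intro x
      by_cases hx : x ∈ t <;> simp [hχt, Set.indicator, hx]
    have hind : ∀ x, χ₂ x * χt x = (s₂ ∩ t).indicator (fun _ => (1:ℝ)) x := by
      intro x
      by_cases h1 : x ∈ s₂ <;> by_cases h2 : x ∈ t <;>
        simp [hχ₂, hχt, Set.indicator, h1, h2]
    calc ∫ x in s ∩ t, g x ∂μ = ∫ x in s, t.indicator g x ∂μ := by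
          rw [setIntegral_indicator ht']
      _ = ∫ x in s, (g * χt) x ∂μ := by
          refine setIntegral_congr_ae (hm₁ s hs) ?_
          exact Filter.Eventually.of_forall fun x _ => (hgt x).symm
      _ = ∫ x in s, (μ[g * χt | m₁]) x ∂μ := by
          refine (setIntegral_condExp hm₁ ?_ hs).symm
          exact hχtint.bdd_mul hgint.aestronglyMeasurable hgbd
      _ = ∫ x in s, (μ[(s₂ ∩ t).indicator (fun _ => (1:ℝ)) | m₁]) x ∂μ := by
          refine setIntegral_congr_ae (hm₁ s hs) ?_
          have hpull : μ[g * χt | m₁] =ᵐ[μ] g * μ[χt | m₁] :=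
            condExp_stronglyMeasurable_mul_of_bound hm₁ stronglyMeasurable_condExp
              hχtint 1 hgbd
          have hci : (μ⟦s₂ ∩ t | m₁⟧) =ᵐ[μ] (μ⟦s₂ | m₁⟧) * (μ⟦t | m₁⟧) := hCI' s₂ t hs₂ ht
          filter_upwards [hpull, hci] with x hx hcix
          intro _
          rw [hx]
          simp only [Pi.mul_apply] at hcix ⊢
          rw [← hcix]
      _ = ∫ x in s, (s₂ ∩ t).indicator (fun _ => (1:ℝ)) x ∂μ := by
          refine setIntegral_condExp hm₁ ?_ hs
          exact (integrable_const (1:ℝ)).indicator ((hm₂ _ hs₂).inter ht')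
      _ = ∫ x in s, (χ₂ * χt) x ∂μ := by
          refine setIntegral_congr_ae (hm₁ s hs) ?_
          exact Filter.Eventually.of_forall fun x _ => (hind x).symm
      _ = ∫ x in s, t.indicator χ₂ x ∂μ := by
          refine setIntegral_congr_ae (hm₁ s hs) ?_
          refine Filter.Eventually.of_forall fun x _ => ?_
          by_cases hx : x ∈ t <;> simp [hχt, Set.indicator, hx]
      _ = ∫ x in s ∩ t, χ₂ x ∂μ := setIntegral_indicator ht'
  -- Main step: μ[Y | m₁ ⊔ m₂] = μ[Y | m₁] a.e.
  have hae : (μ[Y | m₁ ⊔ m₂]) =ᵐ[μ] μ[Y | m₁] := by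
    refine (ae_eq_condExp_of_forall_setIntegral_eq hsup hYint
      (fun s _ _ => integrable_condExp.integrableOn) ?_
      ((stronglyMeasurable_condExp.mono (le_sup_left : m₁ ≤ m₁ ⊔ m₂)).aestronglyMeasurable (μ := μ))).symm
    intro u hu _
    refine setIntegral_eq_on_sup_aux m₁ m₂ hm₁ hm₂ integrable_condExp hYint ?_ u hu
    intro s₁ s₂ hs₁ hs₂
    have hs₁' : MeasurableSet[mΩ] s₁ := hm₁ s₁ hs₁
    have hs₂' : MeasurableSet[mΩ] s₂ := hm₂ s₂ hs₂
    set χ₂ : Ω → ℝ := s₂.indicator (fun _ => (1:ℝ)) with hχ₂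
    have hχ₂int : Integrable χ₂ μ := (integrable_const (1:ℝ)).indicator hs₂'
    have hχ₂bd : ∀ᵐ x ∂μ, ‖χ₂ x‖ ≤ (1:ℝ) := by
      refine Filter.Eventually.of_forall fun x => ?_
      by_cases hx : x ∈ s₂ <;> simp [hχ₂, Set.indicator, hx]
    set g : Ω → ℝ := μ[χ₂ | m₁] with hgdef
    have hgint : Integrable g μ := integrable_condExp
    have hgbd : ∀ᵐ x ∂μ, ‖g x‖ ≤ (1:ℝ) := by
      have hb : ∀ᵐ x ∂μ, |χ₂ x| ≤ ((1:ℝ≥0) : ℝ) := by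
        filter_upwards [hχ₂bd] with x hx; simpa [Real.norm_eq_abs] using hx
      have := ae_bdd_condExp_of_ae_bdd (m := m₁) (μ := μ) hb
      filter_upwards [this] with x hx
      simpa [Real.norm_eq_abs] using hx
    have hYM : Measurable[m₁ ⊔ mco Y] Y :=
      measurable_iff_comap_le.mpr (le_sup_right : mco Y ≤ m₁ ⊔ mco Y)
    -- key sub-step: for integrable (m₁ ⊔ mco Y)-strongly measurable F, ∫ F χ₂ = ∫ F g
    have key : ∀ F : Ω → ℝ, StronglyMeasurable[m₁ ⊔ mco Y] F → Integrable F μ →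
        ∫ x, F x * χ₂ x ∂μ = ∫ x, F x * g x ∂μ := by
      intro F hFm hFint
      have hFχint : Integrable (F * χ₂) μ := by
        have h2 : Integrable (fun x => χ₂ x * F x) μ :=
          hFint.bdd_mul hχ₂int.aestronglyMeasurable hχ₂bd
        exact h2.congr (Filter.Eventually.of_forall fun x => mul_comm _ _)
      have hpull : μ[F * χ₂ | m₁ ⊔ mco Y] =ᵐ[μ] F * μ[χ₂ | m₁ ⊔ mco Y] :=
        condExp_mul_of_stronglyMeasurable_left hFm hFχint hχ₂int
      calc ∫ x, F x * χ₂ x ∂μ = ∫ x, (μ[F * χ₂ | m₁ ⊔ mco Y]) x ∂μ :=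
            (integral_condExp hM (f := F * χ₂)).symm
        _ = ∫ x, F x * g x ∂μ := by
            refine integral_congr_ae ?_
            filter_upwards [hpull, claimB s₂ hs₂] with x h1 h2
            rw [h1]
            simp only [Pi.mul_apply]
            rw [h2]
    set F : Ω → ℝ := s₁.indicator Y with hF
    set G : Ω → ℝ := s₁.indicator (μ[Y | m₁]) with hG
    have hFm : StronglyMeasurable[m₁ ⊔ mco Y] F := by
      refine StronglyMeasurable.indicator ?_ ((le_sup_left : m₁ ≤ m₁ ⊔ mco Y) s₁ hs₁)
      exact hYM.stronglyMeasurable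
    have hGm : StronglyMeasurable[m₁ ⊔ mco Y] G := by
      refine StronglyMeasurable.indicator ?_ ((le_sup_left : m₁ ≤ m₁ ⊔ mco Y) s₁ hs₁)
      exact stronglyMeasurable_condExp.mono (le_sup_left : m₁ ≤ m₁ ⊔ mco Y)
    have hFint : Integrable F μ := hYint.indicator hs₁'
    have hGint : Integrable G μ := integrable_condExp.indicator hs₁'
    -- ∫ F * g = ∫ G * g via conditioning on m₁
    have hFG : ∫ x, F x * g x ∂μ = ∫ x, G x * g x ∂μ := by
      have hgFint : Integrable (fun x => g x * F x) μ :=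
        hFint.bdd_mul hgint.aestronglyMeasurable hgbd
      have hpull : μ[g * F | m₁] =ᵐ[μ] g * μ[F | m₁] :=
        condExp_stronglyMeasurable_mul_of_bound hm₁ stronglyMeasurable_condExp hFint 1 hgbd
      have hcondF : μ[F | m₁] =ᵐ[μ] G := condExp_indicator (μ := μ) (m := m₁) hYint hs₁
      calc ∫ x, F x * g x ∂μ = ∫ x, g x * F x ∂μ := by
            simp_rw [mul_comm]
        _ = ∫ x, (μ[g * F | m₁]) x ∂μ := (integral_condExp hm₁ (f := fun x => g x * F x)).symm
        _ = ∫ x, G x * g x ∂μ := by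
            refine integral_congr_ae ?_
            filter_upwards [hpull, hcondF] with x h1 h2
            rw [h1]
            simp only [Pi.mul_apply]
            rw [h2, mul_comm]
    have e1 : ∫ x in s₁ ∩ s₂, (μ[Y | m₁]) x ∂μ = ∫ x, G x * χ₂ x ∂μ := by
      rw [Set.inter_comm, ← setIntegral_indicator hs₁', ← integral_indicator hs₂']
      refine integral_congr_ae (Filter.Eventually.of_forall fun x => ?_)
      by_cases hx : x ∈ s₂ <;> simp [hχ₂, hG, Set.indicator, hx]
    have e2 : ∫ x in s₁ ∩ s₂, Y x ∂μ = ∫ x, F x * χ₂ x ∂μ := by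
      rw [Set.inter_comm, ← setIntegral_indicator hs₁', ← integral_indicator hs₂']
      refine integral_congr_ae (Filter.Eventually.of_forall fun x => ?_)
      by_cases hx : x ∈ s₂ <;> simp [hχ₂, hF, Set.indicator, hx]
    rw [e1, e2, key F hFm hFint, key G hGm hGint, hFG]
  refine integral_congr_ae ?_
  filter_upwards [hae] with ω hω
  rw [hω]

theorem mse_surplus_zero_of_condIndep
    {Ω : Type*} (m₁ m₂ : MeasurableSpace Ω) [mΩ : MeasurableSpace Ω] [StandardBorelSpace Ω] [Nonempty Ω]
    (μ : Measure Ω) [IsProbabilityMeasure μ]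
    (hm₁ : m₁ ≤ mΩ) (hm₂ : m₂ ≤ mΩ)
    (Y : Ω → ℝ) (hYmeas : Measurable Y) (hYL2 : MemLp Y 2 μ)
    (hCI : CondIndep m₁ m₂ (MeasurableSpace.comap Y inferInstance) hm₁ μ) :
    ∫ ω, (Y ω - (μ[Y | m₁ ⊔ m₂]) ω) ^ 2 ∂μ = ∫ ω, (Y ω - (μ[Y | m₁]) ω) ^ 2 ∂μ :=
  mse_aux (mΩ := mΩ) m₁ m₂ μ hm₁ hm₂ Y hYmeas hYL2 hCI
end

section
/- Let d ∈ ℕ with d ≥ 1, let ν : Finset (Fin d) → ℝ be a value function, and let i, j ∈ Fin d with i ≠ j. If ν(insert i S) = ν(insert j S) for every S ⊆ Finset.univ \ {i, j}, then the Shapley values satisfy φ_i(ν) = φ_j(ν) (symmetry). -/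
open Finset

noncomputable def shapley (d : ℕ) (ν : Finset (Fin d) → ℝ) (j : Fin d) : ℝ :=
  (1 / (Nat.factorial d : ℝ)) * ∑ π : Equiv.Perm (Fin d),
    (ν (Finset.univ.filter fun i => π i ≤ π j) - ν (Finset.univ.filter fun i => π i < π j))

theorem shapley_symmetry (d : ℕ) (hd : 1 ≤ d) (ν : Finset (Fin d) → ℝ) (i j : Fin d)
    (hij : i ≠ j)
    (h : ∀ S ⊆ Finset.univ \ {i, j}, ν (insert i S) = ν (insert j S)) :
    shapley d ν i = shapley d ν j := by
  classical
  set σ := Equiv.swap i j with hσ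
  have hmem : ∀ (A : Finset (Fin d)) x, x ∈ A.image σ ↔ σ x ∈ A := by
    intro A x
    simp only [Finset.mem_image]
    constructor
    · rintro ⟨a, ha, rfl⟩
      simpa [hσ, Equiv.swap_apply_self] using ha
    · intro hx
      exact ⟨σ x, hx, by simp [hσ, Equiv.swap_apply_self]⟩
  have hswap : ∀ A : Finset (Fin d), ν (A.image σ) = ν A := by
    intro A
    have herasei : i ∉ A → A.erase j ⊆ Finset.univ \ {i, j} := by
      intro hi x hx
      simp only [Finset.mem_erase] at hx
      simp only [Finset.mem_sdiff, Finset.mem_univ, true_and, Finset.mem_insert,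
        Finset.mem_singleton, not_or]
      exact ⟨fun hxi => hi (hxi ▸ hx.2), hx.1⟩
    have herasej : j ∉ A → A.erase i ⊆ Finset.univ \ {i, j} := by
      intro hj x hx
      simp only [Finset.mem_erase] at hx
      simp only [Finset.mem_sdiff, Finset.mem_univ, true_and, Finset.mem_insert,
        Finset.mem_singleton, not_or]
      exact ⟨hx.1, fun hxj => hj (hxj ▸ hx.2)⟩
    by_cases hi : i ∈ A <;> by_cases hj : j ∈ A
    · congr 1
      ext x
      rw [hmem]
      rcases eq_or_ne x i with rfl | hxi
      · simp [hσ, hi, hj]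
      rcases eq_or_ne x j with rfl | hxj
      · simp [hσ, hi, hj]
      · simp [hσ, Equiv.swap_apply_of_ne_of_ne hxi hxj]
    · have h1 : A = insert i (A.erase i) := (Finset.insert_erase hi).symm
      have h2 : A.image σ = insert j (A.erase i) := by
        ext x
        rw [hmem, Finset.mem_insert, Finset.mem_erase]
        rcases eq_or_ne x i with rfl | hxi
        · simp [hσ, hj, hij]
        rcases eq_or_ne x j with rfl | hxj
        · simp [hσ, hi]
        · simp [hσ, Equiv.swap_apply_of_ne_of_ne hxi hxj, hxi, hxj]
      rw [h2]
      conv_rhs => rw [h1]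
      exact (h _ (herasej hj)).symm
    · have h1 : A = insert j (A.erase j) := (Finset.insert_erase hj).symm
      have h2 : A.image σ = insert i (A.erase j) := by
        ext x
        rw [hmem, Finset.mem_insert, Finset.mem_erase]
        rcases eq_or_ne x i with rfl | hxi
        · simp [hσ, hj]
        rcases eq_or_ne x j with rfl | hxj
        · simp [hσ, hi, hij.symm]
        · simp [hσ, Equiv.swap_apply_of_ne_of_ne hxi hxj, hxi, hxj]
      rw [h2]
      conv_rhs => rw [h1]
      exact h _ (herasei hi)
    · congr 1
      ext x
      rw [hmem]
      rcases eq_or_ne x i with rfl | hxi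
      · simp [hσ, hi, hj]
      rcases eq_or_ne x j with rfl | hxj
      · simp [hσ, hi, hj]
      · simp [hσ, Equiv.swap_apply_of_ne_of_ne hxi hxj]
  unfold shapley
  congr 1
  refine Fintype.sum_equiv (Equiv.mulRight σ) _ _ fun τ => ?_
  have key : ∀ (P : Fin d → Fin d → Prop) [∀ a b, Decidable (P a b)],
      (Finset.univ.filter fun k => P ((Equiv.mulRight σ τ) k) ((Equiv.mulRight σ τ) j)) =
        (Finset.univ.filter fun k => P (τ k) (τ i)).image σ := by
    intro P _
    ext x
    rw [hmem]
    simp [Equiv.mulRight, hσ, Equiv.swap_apply_self]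
  rw [key (· ≤ ·), key (· < ·), hswap, hswap]
end

section
/- Let d ∈ ℕ with d ≥ 1, let ν, ν' : Finset (Fin d) → ℝ be value functions, and let j ∈ Fin d. If ν(insert j S) − ν(S) ≥ ν'(insert j S) − ν'(S) for every S ⊆ Finset.univ \ {j}, then φ_j(ν) ≥ φ_j(ν') (monotonicity). -/
open Finset

theorem shapley_monotonicity (d : ℕ) (hd : 1 ≤ d) (ν ν' : Finset (Fin d) → ℝ) (j : Fin d)
    (h : ∀ S ⊆ Finset.univ \ {j},
      ν (insert j S) - ν S ≥ ν' (insert j S) - ν' S) :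
    shapley d ν j ≥ shapley d ν' j := by
  unfold shapley
  apply mul_le_mul_of_nonneg_left _ (by positivity)
  apply Finset.sum_le_sum
  intro π _
  have hset : (Finset.univ.filter fun i => π i ≤ π j) =
      insert j (Finset.univ.filter fun i => π i < π j) := by
    ext i
    simp only [Finset.mem_filter, Finset.mem_insert, Finset.mem_univ, true_and]
    constructor
    · intro hi
      rcases lt_or_eq_of_le hi with h' | h'
      · exact Or.inr h'
      · exact Or.inl (π.injective h')
    · rintro (rfl | hi)
      · exact le_refl _
      · exact le_of_lt hi
  have hsub : (Finset.univ.filter fun i => π i < π j) ⊆ Finset.univ \ {j} := by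
    intro i hi
    simp only [Finset.mem_filter] at hi
    simp only [Finset.mem_sdiff, Finset.mem_univ, Finset.mem_singleton, true_and]
    rintro rfl; exact lt_irrefl _ hi.2
  rw [hset]
  exact h _ hsub
end

section
/- Let (Ω, F, μ) be a standard Borel probability space, let d ∈ ℕ with d ≥ 1, let X_i : Ω → ℝ (i ∈ Fin d) be measurable features, and let Y : Ω → ℝ be square-integrable. For S : Finset (Fin d), let m_S denote the σ-algebra generated jointly by (X_i)_{i ∈ S}, and define the MSE value function ν(S) = E[(Y − E[Y])²] − E[(Y − E[Y | m_S])²]. Fix j ∈ Fin d. If for every S ⊆ Finset.univ \ {j} the σ-algebras σ(X_j) and σ(Y) are conditionally independent given m_S, then the SAGE value φ_j(ν) = 0. -/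
/-!
Write `m_S` for the σ-algebra of the features in `S`. If `X_j` and `Y` are conditionally
independent given `m_S`, then `E[Y | m_S ⊔ σ(X_j)] = E[Y | m_S]`: on the π-system of sets `B ∩ C`
with `B ∈ m_S`, `C ∈ σ(X_j)`, pulling the `m_S`-measurable factor out of `E[1_C E[1_D | m_S] | m_S]`
and factorising `E[1_{C ∩ D} | m_S]` gives `∫_{B ∩ C} 1_D = ∫_{B ∩ C} E[1_D | m_S]` for
`D ∈ σ(Y)`, and this passes to all `σ(Y)`-measurable integrable functions by density in `L¹`.
So `ν (insert j S) = ν S` whenever `j ∉ S`, and every marginal contribution of `j` in the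
Shapley sum vanishes.
-/

open MeasureTheory ProbabilityTheory Finset

/-- The σ-algebra generated jointly by the features `X i` for `i ∈ S`. -/
def coalitionSigma {Ω : Type*} {d : ℕ} (X : Fin d → Ω → ℝ) (S : Finset (Fin d)) :
    MeasurableSpace Ω :=
  ⨆ i ∈ S, MeasurableSpace.comap (X i) inferInstance

theorem coalitionSigma_le {Ω : Type*} [mΩ : MeasurableSpace Ω] {d : ℕ}
    {X : Fin d → Ω → ℝ} (hX : ∀ i, Measurable (X i)) (S : Finset (Fin d)) :
    coalitionSigma X S ≤ mΩ :=
  iSup₂_le fun i _ => (hX i).comap_le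

section CondExp

variable {Ω E : Type*} [NormedAddCommGroup E] [NormedSpace ℝ E] [CompleteSpace E]
  {m m₀ : MeasurableSpace Ω} {μ : Measure Ω}

theorem continuous_setIntegral_condExp (hm : m ≤ m₀) [SigmaFinite (μ.trim hm)] (s : Set Ω) :
    Continuous fun f : Ω →₁[μ] E => ∫ x in s, (μ[f | m]) x ∂μ := by
  have h : (fun f : Ω →₁[μ] E => ∫ x in s, (μ[f | m]) x ∂μ)
      = fun f => ∫ x in s, condExpL1CLM E hm μ f x ∂μ := by
    funext f
    have hf := condExp_ae_eq_condExpL1CLM hm (L1.integrable_coeFn f)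
    rw [Integrable.toL1_coeFn] at hf
    exact integral_congr_ae (ae_restrict_of_ae hf)
  rw [h]
  exact (continuous_setIntegral s).comp (condExpL1CLM E hm μ).continuous

end CondExp

section PiSystem

variable {Ω : Type*}

theorem MeasurableSpace.generateFrom_image2_inter (m₁ m₂ : MeasurableSpace Ω) :
    generateFrom (Set.image2 (· ∩ ·) {s | MeasurableSet[m₁] s} {s | MeasurableSet[m₂] s})
      = m₁ ⊔ m₂ := by
  refine le_antisymm (generateFrom_le ?_) (sup_le (fun s hs => ?_) (fun s hs => ?_))
  · rintro _ ⟨s, hs, t, ht, rfl⟩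
    exact (le_sup_left (b := m₂) s hs).inter (le_sup_right (a := m₁) t ht)
  · exact measurableSet_generateFrom ⟨s, hs, Set.univ, .univ, Set.inter_univ s⟩
  · exact measurableSet_generateFrom ⟨Set.univ, .univ, s, hs, Set.univ_inter s⟩

theorem isPiSystem_image2_inter (m₁ m₂ : MeasurableSpace Ω) :
    IsPiSystem (Set.image2 (· ∩ ·) {s | MeasurableSet[m₁] s} {s | MeasurableSet[m₂] s}) := by
  rintro _ ⟨s₁, hs₁, t₁, ht₁, rfl⟩ _ ⟨s₂, hs₂, t₂, ht₂, rfl⟩ -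
  exact ⟨s₁ ∩ s₂, hs₁.inter hs₂, t₁ ∩ t₂, ht₁.inter ht₂, Set.inter_inter_inter_comm _ _ _ _⟩

theorem setIntegral_eq_of_isPiSystem {m mΩ : MeasurableSpace Ω} {μ : Measure Ω} (hm : m ≤ mΩ)
    {C : Set (Set Ω)} (hgen : m = MeasurableSpace.generateFrom C) (hC : IsPiSystem C)
    {f g : Ω → ℝ} (hf : Integrable f μ) (hg : Integrable g μ) (huniv : ∫ x, f x ∂μ = ∫ x, g x ∂μ)
    (hfg : ∀ s ∈ C, ∫ x in s, f x ∂μ = ∫ x in s, g x ∂μ) {s : Set Ω}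
    (hs : MeasurableSet[m] s) : ∫ x in s, f x ∂μ = ∫ x in s, g x ∂μ := by
  induction s, hs using MeasurableSpace.induction_on_inter hgen hC with
  | empty => simp
  | basic s hs => exact hfg s hs
  | compl s hs ih =>
    rw [setIntegral_compl (hm s hs) hf, setIntegral_compl (hm s hs) hg, huniv, ih]
  | iUnion s hdisj hs ih =>
    rw [integral_iUnion (fun i => hm _ (hs i)) hdisj hf.integrableOn,
      integral_iUnion (fun i => hm _ (hs i)) hdisj hg.integrableOn]
    exact tsum_congr ih

end PiSystem

section CondIndep

variable {Ω : Type*} {m' m₁ m₂ mΩ : MeasurableSpace Ω} [StandardBorelSpace Ω]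
  {μ : Measure Ω} [IsFiniteMeasure μ] {hm' : m' ≤ mΩ}

theorem setIntegral_inter_condExp_indicator_of_condIndep (hm₁ : m₁ ≤ mΩ) (hm₂ : m₂ ≤ mΩ)
    (hCI : CondIndep m' m₁ m₂ hm' μ) {s t u : Set Ω} (hs : MeasurableSet[m'] s)
    (ht : MeasurableSet[m₁] t) (hu : MeasurableSet[m₂] u) :
    ∫ x in s ∩ t, (μ⟦u | m'⟧) x ∂μ = μ.real (s ∩ t ∩ u) := by
  have hindep := (condIndep_iff m' m₁ m₂ hm' hm₁ hm₂ μ).1 hCI t u ht hu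
  have hpull : μ[t.indicator (μ⟦u | m'⟧) | m'] =ᵐ[μ] μ⟦u | m'⟧ * μ⟦t | m'⟧ := by
    have ht_ind : t.indicator (μ⟦u | m'⟧) = μ⟦u | m'⟧ * t.indicator fun _ => (1 : ℝ) := by
      ext x; by_cases hx : x ∈ t <;> simp [hx]
    rw [ht_ind]
    exact condExp_mul_of_stronglyMeasurable_left stronglyMeasurable_condExp
      (ht_ind ▸ integrable_condExp.indicator (hm₁ t ht))
      ((integrable_const 1).indicator (hm₁ t ht))
  calc ∫ x in s ∩ t, (μ⟦u | m'⟧) x ∂μ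
      = ∫ x in s, t.indicator (μ⟦u | m'⟧) x ∂μ := by
        rw [setIntegral_indicator (hm₁ t ht)]
    _ = ∫ x in s, (μ[t.indicator (μ⟦u | m'⟧) | m']) x ∂μ :=
        (setIntegral_condExp hm' (integrable_condExp.indicator (hm₁ t ht)) hs).symm
    _ = ∫ x in s, (μ⟦t ∩ u | m'⟧) x ∂μ := by
        refine integral_congr_ae (ae_restrict_of_ae ?_)
        filter_upwards [hpull, hindep] with x hx hx'
        rw [hx, hx', Pi.mul_apply, Pi.mul_apply, mul_comm]
    _ = μ.real (s ∩ t ∩ u) := by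
        have htu : MeasurableSet (t ∩ u) := (hm₁ t ht).inter (hm₂ u hu)
        rw [setIntegral_condExp hm' ((integrable_const 1).indicator htu) hs,
          setIntegral_indicator htu, setIntegral_const, smul_eq_mul, mul_one, Set.inter_assoc]

theorem setIntegral_inter_condExp_of_condIndep (hm₁ : m₁ ≤ mΩ) (hm₂ : m₂ ≤ mΩ)
    (hCI : CondIndep m' m₁ m₂ hm' μ) {s t : Set Ω} (hs : MeasurableSet[m'] s)
    (ht : MeasurableSet[m₁] t) {f : Ω → ℝ} (hf : StronglyMeasurable[m₂] f)
    (hfi : Integrable f μ) :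
    ∫ x in s ∩ t, (μ[f | m']) x ∂μ = ∫ x in s ∩ t, f x ∂μ := by
  refine MemLp.induction_stronglyMeasurable hm₂ ENNReal.one_ne_top
    (fun f => ∫ x in s ∩ t, (μ[f | m']) x ∂μ = ∫ x in s ∩ t, f x ∂μ) ?_ ?_ ?_ ?_
    (memLp_one_iff_integrable.2 hfi) hf.aestronglyMeasurable
  · intro c u hu _
    have hsmul : (u.indicator fun _ => c) = c • u.indicator fun _ => (1 : ℝ) := by
      ext x; by_cases hx : x ∈ u <;> simp [hx]
    rw [hsmul, integral_congr_ae (ae_restrict_of_ae (condExp_smul c _ m')), Pi.smul_def,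
      integral_smul, setIntegral_inter_condExp_indicator_of_condIndep hm₁ hm₂ hCI hs ht hu,
      Pi.smul_def, integral_smul, setIntegral_indicator (hm₂ u hu), setIntegral_const]
    simp only [smul_eq_mul, mul_one]
  · intro f g _ hf hg _ _ hPf hPg
    rw [memLp_one_iff_integrable] at hf hg
    rw [integral_congr_ae (ae_restrict_of_ae (condExp_add hf hg m')), Pi.add_def,
      integral_add integrable_condExp.integrableOn integrable_condExp.integrableOn,
      integral_add' hf.integrableOn hg.integrableOn, hPf, hPg]
  · exact isClosed_eq ((continuous_setIntegral_condExp hm' _).comp continuous_subtype_val)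
      ((continuous_setIntegral _).comp continuous_subtype_val)
  · intro f g hfg _ hPf
    rwa [← integral_congr_ae (ae_restrict_of_ae hfg),
      ← integral_congr_ae (ae_restrict_of_ae (condExp_congr_ae hfg))]

theorem condExp_sup_ae_eq_of_condIndep (hm₁ : m₁ ≤ mΩ) (hm₂ : m₂ ≤ mΩ)
    (hCI : CondIndep m' m₁ m₂ hm' μ) {f : Ω → ℝ} (hf : StronglyMeasurable[m₂] f) :
    μ[f | m' ⊔ m₁] =ᵐ[μ] μ[f | m'] := by
  by_cases hfi : Integrable f μ
  swap; · simp [condExp_of_not_integrable hfi]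
  refine (ae_eq_condExp_of_forall_setIntegral_eq (sup_le hm' hm₁) hfi
    (fun _ _ _ => integrable_condExp.integrableOn) (fun s hs _ => ?_)
    (stronglyMeasurable_condExp.mono (le_sup_left : m' ≤ m' ⊔ m₁)).aestronglyMeasurable).symm
  refine setIntegral_eq_of_isPiSystem (sup_le hm' hm₁)
    (MeasurableSpace.generateFrom_image2_inter m' m₁).symm (isPiSystem_image2_inter m' m₁)
    integrable_condExp hfi (integral_condExp hm') ?_ hs
  rintro _ ⟨B, hB, C, hC, rfl⟩
  exact setIntegral_inter_condExp_of_condIndep hm₁ hm₂ hCI hB hC hf hfi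

end CondIndep

theorem Finset.filter_le_eq_insert_filter_lt {α β : Type*} [Fintype α] [DecidableEq α]
    [LinearOrder β] {f : α → β} (hf : Function.Injective f) (j : α) :
    univ.filter (fun i => f i ≤ f j) = insert j (univ.filter fun i => f i < f j) := by
  ext i
  simp only [mem_filter, mem_univ, true_and, mem_insert, le_iff_lt_or_eq, hf.eq_iff]
  tauto

theorem shapley_eq_zero_of_dummy {d : ℕ} {ν : Finset (Fin d) → ℝ} {j : Fin d}
    (hdummy : ∀ S, j ∉ S → ν (insert j S) = ν S) : shapley d ν j = 0 := by
  refine mul_eq_zero_of_right _ (sum_eq_zero fun π _ => ?_)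
  rw [filter_le_eq_insert_filter_lt π.injective j, hdummy _ (by simp), sub_self]

theorem coalitionSigma_insert {Ω : Type*} {d : ℕ} (X : Fin d → Ω → ℝ) (j : Fin d)
    (S : Finset (Fin d)) :
    coalitionSigma X (insert j S)
      = coalitionSigma X S ⊔ MeasurableSpace.comap (X j) inferInstance := by
  rw [coalitionSigma, coalitionSigma, Finset.iSup_insert, sup_comm]

theorem dSAGE_zero_of_condIndep_general
    {Ω : Type*} [mΩ : MeasurableSpace Ω] [StandardBorelSpace Ω]
    (μ : Measure Ω) [IsProbabilityMeasure μ]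
    (d : ℕ) (X : Fin d → Ω → ℝ) (hX : ∀ i, Measurable (X i))
    (Y : Ω → ℝ) (hYmeas : Measurable Y)
    (ν : Finset (Fin d) → ℝ)
    (hν : ∀ S : Finset (Fin d),
      ν S = ∫ ω, (Y ω - ∫ ω', Y ω' ∂μ) ^ 2 ∂μ
        - ∫ ω, (Y ω - (μ[Y | coalitionSigma X S]) ω) ^ 2 ∂μ)
    (j : Fin d)
    (hCI : ∀ S ⊆ Finset.univ \ {j},
      CondIndep (coalitionSigma X S)
        (MeasurableSpace.comap (X j) inferInstance)
        (MeasurableSpace.comap Y inferInstance)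
        (coalitionSigma_le hX S) μ) :
    shapley d ν j = 0 := by
  refine shapley_eq_zero_of_dummy fun S hjS => ?_
  have hce : μ[Y | coalitionSigma X (insert j S)] =ᵐ[μ] μ[Y | coalitionSigma X S] := by
    rw [coalitionSigma_insert]
    exact condExp_sup_ae_eq_of_condIndep (hX j).comap_le hYmeas.comap_le
      (hCI S (by simpa [subset_sdiff] using hjS)) (comap_measurable Y).stronglyMeasurable
  rw [hν, hν]
  congr 1
  exact integral_congr_ae (hce.mono fun ω hω => by simp only [hω])

theorem dSAGE_zero_of_condIndep
    {Ω : Type*} [mΩ : MeasurableSpace Ω] [StandardBorelSpace Ω] [Nonempty Ω]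
    (μ : Measure Ω) [IsProbabilityMeasure μ]
    (d : ℕ) (hd : 1 ≤ d) (X : Fin d → Ω → ℝ) (hX : ∀ i, Measurable (X i))
    (Y : Ω → ℝ) (hYmeas : Measurable Y) (hYL2 : MemLp Y 2 μ)
    (ν : Finset (Fin d) → ℝ)
    (hν : ∀ S : Finset (Fin d),
      ν S = ∫ ω, (Y ω - ∫ ω', Y ω' ∂μ) ^ 2 ∂μ
        - ∫ ω, (Y ω - (μ[Y | coalitionSigma X S]) ω) ^ 2 ∂μ)
    (j : Fin d)
    (hCI : ∀ S ⊆ Finset.univ \ {j},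
      CondIndep (coalitionSigma X S)
        (MeasurableSpace.comap (X j) inferInstance)
        (MeasurableSpace.comap Y inferInstance)
        (coalitionSigma_le hX S) μ) :
    shapley d ν j = 0 :=
  dSAGE_zero_of_condIndep_general (mΩ := mΩ) μ d X hX Y hYmeas ν hν j hCI
end

section
/- Let (Ω, F, μ) be a probability space, let d ∈ ℕ, let X_i : Ω → ℝ (i ∈ Fin d) be measurable features, let Y : Ω → ℝ be square-integrable, and for each i let g_i : ℝ ≃ᵐ ℝ be a measurable equivalence (a measurable bijection with measurable inverse). For S : Finset (Fin d), let m_S denote the σ-algebra generated jointly by (X_i)_{i ∈ S} and m'_S the σ-algebra generated jointly by (g_i ∘ X_i)_{i ∈ S}, and define ν(S) = E[(Y − E[Y])²] − E[(Y − E[Y | m_S])²] and ν'(S) analogously with m'_S. Then ν = ν', and consequently φ_j(ν) = φ_j(ν') for every j ∈ Fin d: the SAGE values of the MSE-optimal predictor are invariant under invertible measurable transformations of the inputs. -/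
open MeasureTheory Finset

theorem MeasurableEmbedding.comap_comp {α β γ : Type*} [MeasurableSpace β] [MeasurableSpace γ]
    {e : β → γ} (he : MeasurableEmbedding e) (f : α → β) :
    MeasurableSpace.comap (e ∘ f) ‹MeasurableSpace γ› = MeasurableSpace.comap f ‹_› := by
  rw [← MeasurableSpace.comap_comp, he.comap_eq]

theorem coalitionSigma_comp_measurableEmbedding {Ω : Type*} {d : ℕ} (X : Fin d → Ω → ℝ)
    {g : Fin d → ℝ → ℝ} (hg : ∀ i, MeasurableEmbedding (g i)) (S : Finset (Fin d)) :
    coalitionSigma (fun i => g i ∘ X i) S = coalitionSigma X S :=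
  iSup_congr fun i => iSup_congr fun _ => (hg i).comap_comp (X i)

theorem sage_invariant_under_measurableEquiv_general
    {Ω : Type*} [mΩ : MeasurableSpace Ω]
    (μ : Measure Ω)
    (d : ℕ) (X : Fin d → Ω → ℝ)
    (Y : Ω → ℝ)
    (g : Fin d → (ℝ ≃ᵐ ℝ))
    (ν ν' : Finset (Fin d) → ℝ)
    (hν : ∀ S : Finset (Fin d),
      ν S = ∫ ω, (Y ω - ∫ ω', Y ω' ∂μ) ^ 2 ∂μ
        - ∫ ω, (Y ω - (μ[Y | coalitionSigma X S]) ω) ^ 2 ∂μ)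
    (hν' : ∀ S : Finset (Fin d),
      ν' S = ∫ ω, (Y ω - ∫ ω', Y ω' ∂μ) ^ 2 ∂μ
        - ∫ ω, (Y ω - (μ[Y | coalitionSigma (fun i => (g i) ∘ (X i)) S]) ω) ^ 2 ∂μ) :
    ν = ν' ∧ ∀ j : Fin d, shapley d ν j = shapley d ν' j := by
  have hνν' : ν = ν' := funext fun S => by
    rw [hν, hν', coalitionSigma_comp_measurableEmbedding X fun i => (g i).measurableEmbedding]
  exact ⟨hνν', fun j => by rw [hνν']⟩

theorem sage_invariant_under_measurableEquiv
    {Ω : Type*} [mΩ : MeasurableSpace Ω]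
    (μ : Measure Ω) [IsProbabilityMeasure μ]
    (d : ℕ) (X : Fin d → Ω → ℝ) (hX : ∀ i, Measurable (X i))
    (Y : Ω → ℝ) (hYmeas : Measurable Y) (hYL2 : MemLp Y 2 μ)
    (g : Fin d → (ℝ ≃ᵐ ℝ))
    (ν ν' : Finset (Fin d) → ℝ)
    (hν : ∀ S : Finset (Fin d),
      ν S = ∫ ω, (Y ω - ∫ ω', Y ω' ∂μ) ^ 2 ∂μ
        - ∫ ω, (Y ω - (μ[Y | coalitionSigma X S]) ω) ^ 2 ∂μ)
    (hν' : ∀ S : Finset (Fin d),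
      ν' S = ∫ ω, (Y ω - ∫ ω', Y ω' ∂μ) ^ 2 ∂μ
        - ∫ ω, (Y ω - (μ[Y | coalitionSigma (fun i => (g i) ∘ (X i)) S]) ω) ^ 2 ∂μ) :
    ν = ν' ∧ ∀ j : Fin d, shapley d ν j = shapley d ν' j :=
  sage_invariant_under_measurableEquiv_general (mΩ := mΩ) μ d X Y g ν ν' hν hν'
end
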